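/- arXiv:1801.04233 — 2 statements merged into one kernel-verified Lean document; each statement's English description precedes it below -/
import Mathlib

section
/- Let (W,S) be a finite Coxeter system with longest element w₀ and I, J ⊆ S. Then P^I and P^J commute as functions on W if and only if P^I(P^J(w₀)) = P^J(P^I(w₀)). -/
open CoxeterSystem

variable {B W : Type*} [Group W] {M : CoxeterMatrix B}

/-- The standard parabolic subgroup `W_J`. -/
def CoxeterSystem.parabolic (cs : CoxeterSystem M W) (J : Set B) : Subgroup W :=
  Subgroup.closure (cs.simple '' J)

/-- The set of minimal-length left coset representatives `W^J`. -/
def CoxeterSystem.minReps (cs : CoxeterSystem M W) (J : Set B) : Set W :=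
  {w : W | ∀ s ∈ J, cs.length w < cs.length (w * cs.simple s)}

/-- `P` is the family of parabolic projections `P^J : W → W`, `w ↦ w^J`. -/
def CoxeterSystem.IsProjFamily (cs : CoxeterSystem M W) (P : Set B → W → W) : Prop :=
  ∀ (J : Set B) (w : W), P J w ∈ cs.minReps J ∧ (P J w)⁻¹ * w ∈ cs.parabolic J

/-!
For `s` a left ascent of `w`, Deodhar's lemma says that `P^J (s w)` is `P^J w` or `s P^J w`, so
`P^I P^J (s w)` and `P^J P^I (s w)` are obtained from `P^I P^J w` and `P^J P^I w` in the same way.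
Both of the latter are prefixes of `w` (lengths add), and two prefixes of `w` cannot differ by
its left ascent `s`. Hence commutation at `s w` gives commutation at `w`, and since every
`w ≠ w₀` has a left ascent, downward induction on the length from `w₀` proves the claim.

The Coxeter-theoretic input (strong exchange, `ℓ (x v) = ℓ x + ℓ v` for `x ∈ W^J` and `v ∈ W_J`,
`ℓ (w₀ z) = ℓ w₀ - ℓ z`) comes from Tits' action of `W` on `W × ZMod 2`, in which `s i` sends
`(t, e)` to `(s i t s i, e + [t = s i])`; its sign component `titsCocycle w t` detects whether the
reflection `t` is a right inversion of `w`.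
-/

namespace CoxeterSystem

variable (cs : CoxeterSystem M W)

open scoped Classical

local prefix:100 "s" => cs.simple
local prefix:100 "π" => cs.wordProd
local prefix:100 "ℓ" => cs.length
local prefix:100 "ris" => cs.rightInvSeq

theorem simple_mul_mul_simple_eq_iff (i : B) (t x : W) :
    s i * t * s i = x ↔ t = s i * x * s i := by
  constructor <;> rintro rfl <;>
    simp only [mul_assoc, cs.simple_mul_simple_cancel_left, cs.simple_mul_simple_self, mul_one]

noncomputable def titsPerm (i : B) : Equiv.Perm (W × ZMod 2) :=
  Function.Involutive.toPerm (fun p => (s i * p.1 * s i, p.2 + if p.1 = s i then 1 else 0)) <| by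
    rintro ⟨t, e⟩
    have hflip : (s i * t * s i = s i) ↔ t = s i := by
      rw [simple_mul_mul_simple_eq_iff, mul_assoc, cs.simple_mul_simple_cancel_left]
    simp only [(cs.simple_mul_mul_simple_eq_iff i _ t).2 rfl, hflip, add_assoc, Prod.mk.injEq,
      true_and]
    split_ifs <;> simp [CharTwo.add_self_eq_zero]

theorem titsPerm_apply (i : B) (t : W) (e : ZMod 2) :
    cs.titsPerm i (t, e) = (s i * t * s i, e + if t = s i then 1 else 0) := rfl

theorem titsPerm_mul_pow_apply (i j : B) (k : ℕ) (t : W) (e : ZMod 2) :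
    ((cs.titsPerm i * cs.titsPerm j) ^ k) (t, e) =
      ((s i * s j) ^ k * t * ((s i * s j) ^ k)⁻¹,
        e + ∑ a ∈ Finset.range (2 * k), if t = s j * (s i * s j) ^ a then 1 else 0) := by
  have hpinv : (s i * s j)⁻¹ * s j = s j * (s i * s j) := by
    rw [mul_inv_rev, cs.inv_simple, cs.inv_simple, mul_assoc]
  have hstep (t : W) (e : ZMod 2) : (cs.titsPerm i * cs.titsPerm j) (t, e) =
      ((s i * s j) * t * (s i * s j)⁻¹, e + (if t = s j * (s i * s j) ^ 0 then 1 else 0) +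
        if t = s j * (s i * s j) ^ 1 then 1 else 0) := by
    rw [Equiv.Perm.mul_apply, titsPerm_apply, titsPerm_apply, simple_mul_mul_simple_eq_iff,
      pow_zero, mul_one, pow_one]
    simp only [mul_inv_rev, cs.inv_simple, mul_assoc]
  generalize s i * s j = p at hpinv hstep ⊢
  induction k generalizing t e with
  | zero => simp
  | succ k ih =>
    have hshift (a : ℕ) : (p * t * p⁻¹ = s j * p ^ a) ↔ t = s j * p ^ (a + 1 + 1) := by
      have key : p⁻¹ * (s j * p ^ a) * p = s j * p ^ (a + 1 + 1) := by
        rw [← mul_assoc, hpinv]; group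
      rw [← key]
      constructor
      · intro h; rw [← h]; group
      · rintro rfl; group
    rw [pow_succ, Equiv.Perm.mul_apply, hstep, ih, show 2 * (k + 1) = 2 * k + 1 + 1 by ring,
      Finset.sum_range_succ', Finset.sum_range_succ']
    simp only [hshift]
    exact Prod.ext (by group) (by ring)

theorem titsPerm_isLiftable : M.IsLiftable cs.titsPerm := by
  intro i j
  ext ⟨t, e⟩ : 1
  have hm : (s i * s j) ^ M.M i j = 1 := cs.simple_mul_simple_pow i j
  -- the summand has period `M i j` in `a`, so the `2 * M i j` terms cancel in pairs
  rw [titsPerm_mul_pow_apply, hm, two_mul, Finset.sum_range_add]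
  simp only [pow_add, hm, one_mul, inv_one, mul_one, CharTwo.add_self_eq_zero, add_zero,
    Equiv.Perm.one_apply]

noncomputable def titsRep : W →* Equiv.Perm (W × ZMod 2) :=
  cs.lift ⟨cs.titsPerm, cs.titsPerm_isLiftable⟩

theorem titsRep_simple (i : B) : cs.titsRep (s i) = cs.titsPerm i :=
  cs.lift_apply_simple cs.titsPerm_isLiftable i

noncomputable def titsCocycle (w t : W) : ZMod 2 := (cs.titsRep w (t, 0)).2

theorem titsRep_apply (w t : W) (e : ZMod 2) :
    cs.titsRep w (t, e) = (w * t * w⁻¹, e + cs.titsCocycle w t) := by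
  induction w using cs.simple_induction_left generalizing t e with
  | one => simp [titsCocycle]
  | mul_simple_left w i ih =>
    have key (e : ZMod 2) : cs.titsRep (s i * w) (t, e) = (s i * w * t * (s i * w)⁻¹,
        e + (cs.titsCocycle w t + if w * t * w⁻¹ = s i then 1 else 0)) := by
      rw [map_mul, Equiv.Perm.mul_apply, ih, titsRep_simple, titsPerm_apply, add_assoc]
      simp only [mul_inv_rev, cs.inv_simple, mul_assoc]
    have hcocycle : cs.titsCocycle (s i * w) t =
        cs.titsCocycle w t + if w * t * w⁻¹ = s i then 1 else 0 :=
      (congrArg Prod.snd (key 0)).trans (zero_add _)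
    rw [key, hcocycle]

theorem titsCocycle_mul (u v t : W) :
    cs.titsCocycle (u * v) t = cs.titsCocycle v t + cs.titsCocycle u (v * t * v⁻¹) := by
  rw [titsCocycle, map_mul, Equiv.Perm.mul_apply, titsRep_apply, titsRep_apply, zero_add]

theorem titsCocycle_simple (i : B) (t : W) :
    cs.titsCocycle (s i) t = if t = s i then 1 else 0 := by
  rw [titsCocycle, titsRep_simple, titsPerm_apply, zero_add]

theorem titsCocycle_wordProd (ω : List B) (t : W) :
    cs.titsCocycle (π ω) t = (ris ω).count t := by
  induction ω with
  | nil => simp [titsCocycle]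
  | cons i ω ih =>
    rw [wordProd_cons, titsCocycle_mul, ih, titsCocycle_simple, rightInvSeq.eq_2, List.count_cons]
    have hcond : π ω * t * (π ω)⁻¹ = s i ↔ (π ω)⁻¹ * s i * π ω = t := by
      constructor <;> intro h <;> rw [← h] <;> group
    simp only [hcond, beq_iff_eq, Nat.cast_add]
    split_ifs <;> simp

theorem titsCocycle_one (t : W) : cs.titsCocycle 1 t = 0 := by
  simp [titsCocycle]

theorem titsCocycle_self {t : W} (ht : cs.IsReflection t) : cs.titsCocycle t t = 1 := by
  obtain ⟨u, i, rfl⟩ := ht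
  have h₁ := cs.titsCocycle_mul (u * s i) u⁻¹ (u * s i * u⁻¹)
  have h₂ := cs.titsCocycle_mul u (s i) (s i)
  have h₃ := cs.titsCocycle_mul u u⁻¹ (u * s i * u⁻¹)
  rw [show u⁻¹ * (u * s i * u⁻¹) * u⁻¹⁻¹ = s i by group] at h₁ h₃
  rw [show s i * s i * (s i)⁻¹ = s i by group, titsCocycle_simple, if_pos rfl] at h₂
  rw [mul_inv_cancel, titsCocycle_one] at h₃
  linear_combination h₁ + h₂ - h₃

theorem mem_rightInvSeq_of_titsCocycle_eq_one {ω : List B} {t : W}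
    (h : cs.titsCocycle (π ω) t = 1) : t ∈ ris ω := by
  rw [titsCocycle_wordProd] at h
  by_contra hmem
  rw [List.count_eq_zero.2 hmem] at h
  exact zero_ne_one h

theorem isRightInversion_of_titsCocycle_eq_one {w t : W} (h : cs.titsCocycle w t = 1) :
    cs.IsRightInversion w t := by
  obtain ⟨ω, hω, rfl⟩ := cs.exists_isReduced w
  exact cs.isRightInversion_of_mem_rightInvSeq hω (cs.mem_rightInvSeq_of_titsCocycle_eq_one h)

theorem titsCocycle_eq_one_iff {w t : W} (ht : cs.IsReflection t) :
    cs.titsCocycle w t = 1 ↔ cs.IsRightInversion w t := by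
  refine ⟨cs.isRightInversion_of_titsCocycle_eq_one, fun hwt => by_contra fun h => ?_⟩
  have hzero : cs.titsCocycle w t = 0 := by
    revert h; generalize cs.titsCocycle w t = a; revert a; decide
  have hflip : cs.titsCocycle (w * t) t = 1 := by
    rw [titsCocycle_mul, titsCocycle_self cs ht, ht.mul_self, one_mul, ht.inv, hzero, add_zero]
  have := (cs.isRightInversion_of_titsCocycle_eq_one hflip).2
  rw [mul_assoc, ht.mul_self, mul_one] at this
  exact lt_asymm hwt.2 this

/-- The strong exchange condition. -/
theorem mem_rightInvSeq_of_isRightInversion {ω : List B} {t : W}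
    (ht : cs.IsRightInversion (π ω) t) : t ∈ ris ω :=
  cs.mem_rightInvSeq_of_titsCocycle_eq_one ((cs.titsCocycle_eq_one_iff ht.1).2 ht)

theorem isRightInversion_mul_iff {u v t : W} (ht : cs.IsReflection t) :
    cs.IsRightInversion (u * v) t ↔
      Xor (cs.IsRightInversion u (v * t * v⁻¹)) (cs.IsRightInversion v t) := by
  rw [← cs.titsCocycle_eq_one_iff ht, ← cs.titsCocycle_eq_one_iff ht,
    ← cs.titsCocycle_eq_one_iff (ht.conj v), titsCocycle_mul]
  generalize cs.titsCocycle u (v * t * v⁻¹) = a, cs.titsCocycle v t = b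
  rw [xor_iff_not_iff]
  revert a b; decide

theorem isRightDescent_mul_iff (u v : W) (j : B) :
    cs.IsRightDescent (u * v) j ↔
      Xor (cs.IsRightInversion u (v * s j * v⁻¹)) (cs.IsRightDescent v j) := by
  simp only [← isRightInversion_simple_iff_isRightDescent,
    cs.isRightInversion_mul_iff (cs.isReflection_simple j)]

theorem eq_simple_of_isRightInversion_simple {i : B} {t : W}
    (h : cs.IsRightInversion (s i) t) : t = s i := by
  have h₁ := (cs.titsCocycle_eq_one_iff h.1).2 h
  rw [titsCocycle_simple] at h₁
  by_contra hne
  rw [if_neg hne] at h₁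
  exact zero_ne_one h₁

theorem isRightInversion_of_forall_length_le {w₀ t : W} (hw₀ : ∀ u, ℓ u ≤ ℓ w₀)
    (ht : cs.IsReflection t) : cs.IsRightInversion w₀ t :=
  ⟨ht, lt_of_le_of_ne (hw₀ _) (ht.length_mul_left_ne w₀)⟩

theorem length_mul_add_length_of_forall_length_le {w₀ : W} (hw₀ : ∀ u, ℓ u ≤ ℓ w₀) (z : W) :
    ℓ (w₀ * z) + ℓ z = ℓ w₀ := by
  induction z using cs.simple_induction_right with
  | one => simp
  | mul_simple_right z i ih =>
    have hflip : cs.IsRightDescent (w₀ * z) i ↔ ¬ cs.IsRightDescent z i := by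
      rw [isRightDescent_mul_iff, iff_true_intro (cs.isRightInversion_of_forall_length_le hw₀
        ((cs.isReflection_simple i).conj z)), xor_true]
    rw [← mul_assoc]
    by_cases hz : cs.IsRightDescent z i
    · have := cs.not_isRightDescent_iff.1 (hflip.not.2 (not_not.2 hz))
      rw [isRightDescent_iff] at hz
      omega
    · have := cs.isRightDescent_iff.1 (hflip.2 hz)
      rw [not_isRightDescent_iff] at hz
      omega

theorem exists_length_lt_simple_mul_of_ne {w₀ u : W} (hw₀ : ∀ u, ℓ u ≤ ℓ w₀) (hu : u ≠ w₀) :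
    ∃ i, ℓ u < ℓ (s i * u) := by
  have hw₀' (v : W) : ℓ v ≤ ℓ w₀⁻¹ := by rw [length_inv]; exact hw₀ v
  obtain ⟨i, hi⟩ := cs.exists_rightDescent_of_ne_one (w := w₀ * u⁻¹) (by
    rwa [Ne, mul_inv_eq_one, eq_comm])
  refine ⟨i, ?_⟩
  have h₁ := cs.length_mul_add_length_of_forall_length_le hw₀' (w₀ * u⁻¹)
  have h₂ := cs.length_mul_add_length_of_forall_length_le hw₀' (w₀ * u⁻¹ * s i)
  rw [inv_mul_cancel_left, length_inv] at h₁
  rw [show w₀⁻¹ * (w₀ * u⁻¹ * s i) = (s i * u)⁻¹ by rw [mul_inv_rev, cs.inv_simple]; group,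
    length_inv] at h₂
  unfold IsRightDescent at hi
  omega

variable {J : Set B}

theorem simple_mem_parabolic {j : B} (hj : j ∈ J) : s j ∈ cs.parabolic J :=
  Subgroup.subset_closure ⟨j, hj, rfl⟩

theorem mem_minReps_iff {x : W} : x ∈ cs.minReps J ↔ ∀ j ∈ J, ¬ cs.IsRightDescent x j := by
  refine forall₂_congr fun j _ => ?_
  rw [IsRightDescent, not_lt]
  exact ((cs.length_mul_simple_ne x j).symm.le_iff_lt).symm

theorem exists_isReduced_wordProd_mul_simple {ω : List B} (hω : cs.IsReduced ω)
    (hωJ : ∀ i ∈ ω, i ∈ J) {j : B} (hj : j ∈ J) :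
    ∃ ω' : List B, cs.IsReduced ω' ∧ (∀ i ∈ ω', i ∈ J) ∧ π ω * s j = π ω' := by
  rcases cs.length_mul_simple (π ω) j with hup | hdown
  · refine ⟨ω.concat j, ?_, by simpa using fun i hi => hi.elim (hωJ i) (· ▸ hj), by
      rw [wordProd_concat]⟩
    rw [IsReduced, wordProd_concat, hup, hω, List.length_concat]
  · obtain ⟨k, hk, hkj⟩ := List.getElem_of_mem <| cs.mem_rightInvSeq_of_isRightInversion
      (ω := ω) ⟨cs.isReflection_simple j, by omega⟩
    rw [length_rightInvSeq] at hk
    have hprod : π ω * s j = π (ω.eraseIdx k) := by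
      rw [← hkj, ← List.getD_eq_getElem _ 1, wordProd_mul_getD_rightInvSeq]
    refine ⟨ω.eraseIdx k, ?_, fun i hi => hωJ i (List.mem_of_mem_eraseIdx hi), hprod⟩
    rw [IsReduced, ← hprod, List.length_eraseIdx_of_lt hk, ← hω]
    omega

theorem exists_isReduced_of_mem_parabolic {v : W} (hv : v ∈ cs.parabolic J) :
    ∃ ω : List B, cs.IsReduced ω ∧ (∀ i ∈ ω, i ∈ J) ∧ v = π ω := by
  induction hv using Subgroup.closure_induction_right with
  | one => exact ⟨[], by simp [IsReduced], by simp, by simp⟩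
  | mul_right _ _ y hy ih =>
    obtain ⟨ω, hω, hωJ, rfl⟩ := ih
    obtain ⟨j, hj, rfl⟩ := hy
    exact cs.exists_isReduced_wordProd_mul_simple hω hωJ hj
  | mul_inv_cancel _ _ y hy ih =>
    obtain ⟨ω, hω, hωJ, rfl⟩ := ih
    obtain ⟨j, hj, rfl⟩ := hy
    simpa only [cs.inv_simple] using cs.exists_isReduced_wordProd_mul_simple hω hωJ hj

theorem exists_isRightDescent_of_mem_parabolic {v : W} (hv : v ∈ cs.parabolic J) (hv1 : v ≠ 1) :
    ∃ j ∈ J, cs.IsRightDescent v j := by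
  obtain ⟨ω, hω, hωJ, rfl⟩ := cs.exists_isReduced_of_mem_parabolic hv
  obtain ⟨ω, j, rfl⟩ : ∃ (ω' : List B) (j : B), ω = ω'.concat j := by
    rcases List.eq_nil_or_concat ω with rfl | h
    · exact absurd (wordProd_nil cs) hv1
    · exact h
  refine ⟨j, hωJ j (by simp), ?_⟩
  rw [IsRightDescent, hω, wordProd_concat, simple_mul_simple_cancel_right, List.length_concat]
  exact Nat.lt_succ_of_le (cs.length_wordProd_le ω)

theorem length_mul_of_minimal {u : W} (hu : ∀ v ∈ cs.parabolic J, ℓ u ≤ ℓ (u * v)) {v : W}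
    (hv : v ∈ cs.parabolic J) : ℓ (u * v) = ℓ u + ℓ v := by
  induction hn : ℓ v generalizing v with
  | zero => rw [cs.length_eq_zero_iff.1 hn, mul_one, add_zero]
  | succ n ih =>
    obtain ⟨j, hj, hdesc⟩ := cs.exists_isRightDescent_of_mem_parabolic hv (by
      rintro rfl; simp at hn)
    obtain ⟨v, rfl⟩ : ∃ v', v = v' * s j := ⟨v * s j, (cs.simple_mul_simple_cancel_right j).symm⟩
    have hv' : v ∈ cs.parabolic J := by
      simpa using mul_mem hv (cs.simple_mem_parabolic hj)
    have hvj : ¬ cs.IsRightDescent v j := by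
      rwa [isRightDescent_iff_not_isRightDescent_mul, simple_mul_simple_cancel_right] at hdesc
    -- a descent `s j` of `u * v` would make `v * s j * v⁻¹ ∈ W_J` an inversion of `u`
    have huvj : ¬ cs.IsRightDescent (u * v) j := fun h => by
      have hconj : v * s j * v⁻¹ ∈ cs.parabolic J :=
        mul_mem (mul_mem hv' (cs.simple_mem_parabolic hj)) (inv_mem hv')
      exact (hu _ hconj).not_gt (((cs.isRightDescent_mul_iff u v j).1 h).or.resolve_right hvj).2
    rw [not_isRightDescent_iff] at hvj huvj
    rw [← mul_assoc, huvj, ih hv' (by omega)]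
    omega

theorem eq_of_mem_minReps_of_minimal {u x : W} (hu : ∀ v ∈ cs.parabolic J, ℓ u ≤ ℓ (u * v))
    (hx : x ∈ cs.minReps J) (hux : u⁻¹ * x ∈ cs.parabolic J) : x = u := by
  by_contra hne
  obtain ⟨j, hj, hdesc⟩ := cs.exists_isRightDescent_of_mem_parabolic hux (by
    rwa [Ne, inv_mul_eq_one, eq_comm])
  have h₁ := cs.length_mul_of_minimal hu hux
  have h₂ := cs.length_mul_of_minimal hu (mul_mem hux (cs.simple_mem_parabolic hj))
  rw [mul_inv_cancel_left] at h₁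
  rw [← mul_assoc, mul_inv_cancel_left] at h₂
  refine cs.mem_minReps_iff.1 hx j hj ?_
  unfold IsRightDescent at hdesc ⊢
  omega

theorem exists_minimal_mem_coset (J : Set B) (w : W) :
    ∃ u, u⁻¹ * w ∈ cs.parabolic J ∧ ∀ v ∈ cs.parabolic J, ℓ u ≤ ℓ (u * v) := by
  obtain ⟨u, hu, hmin⟩ := (measure cs.length).wf.has_min {u | u⁻¹ * w ∈ cs.parabolic J}
    ⟨w, by simp [one_mem]⟩
  refine ⟨u, hu, fun v hv => not_lt.1 fun hlt => hmin (u * v) ?_ hlt⟩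
  show (u * v)⁻¹ * w ∈ cs.parabolic J
  rw [mul_inv_rev, mul_assoc]
  exact mul_mem (inv_mem hv) hu

theorem length_mul_of_mem_minReps {x v : W} (hx : x ∈ cs.minReps J) (hv : v ∈ cs.parabolic J) :
    ℓ (x * v) = ℓ x + ℓ v := by
  obtain ⟨u, hux, hu⟩ := cs.exists_minimal_mem_coset J x
  obtain rfl := cs.eq_of_mem_minReps_of_minimal hu hx hux
  exact cs.length_mul_of_minimal hu hv

theorem eq_of_mem_minReps {x y : W} (hx : x ∈ cs.minReps J) (hy : y ∈ cs.minReps J)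
    (hxy : x⁻¹ * y ∈ cs.parabolic J) : x = y := by
  obtain ⟨u, huy, hu⟩ := cs.exists_minimal_mem_coset J y
  have hux : u⁻¹ * x ∈ cs.parabolic J := by
    simpa [mul_assoc] using mul_mem huy (inv_mem hxy)
  rw [cs.eq_of_mem_minReps_of_minimal hu hx hux, cs.eq_of_mem_minReps_of_minimal hu hy huy]

/-- `x` lies below `w` in the right weak order. -/
def IsPrefix (x w : W) : Prop := ℓ w = ℓ x + ℓ (x⁻¹ * w)

variable {cs}

theorem IsPrefix.trans {x y w : W} (hxy : cs.IsPrefix x y) (hyw : cs.IsPrefix y w) :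
    cs.IsPrefix x w := by
  have h₁ : ℓ (x⁻¹ * w) ≤ ℓ (x⁻¹ * y) + ℓ (y⁻¹ * w) := by
    simpa [mul_assoc] using cs.length_mul_le (x⁻¹ * y) (y⁻¹ * w)
  have h₂ : ℓ w ≤ ℓ x + ℓ (x⁻¹ * w) := by
    simpa using cs.length_mul_le x (x⁻¹ * w)
  unfold IsPrefix at *
  omega

theorem IsPrefix.length_lt_simple_mul {x w : W} (hxw : cs.IsPrefix x w) {i : B}
    (hi : ℓ w < ℓ (s i * w)) : ℓ x < ℓ (s i * x) := by
  have := cs.length_mul_le (s i * x) (x⁻¹ * w)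
  rw [mul_assoc, mul_inv_cancel_left] at this
  unfold IsPrefix at hxw
  omega

theorem IsPrefix.ne_simple_mul {x y w : W} (hx : cs.IsPrefix x w) (hy : cs.IsPrefix y w) {i : B}
    (hi : ℓ w < ℓ (s i * w)) : x ≠ s i * y := by
  rintro rfl
  have h₁ := hx.length_lt_simple_mul hi
  have h₂ := hy.length_lt_simple_mul hi
  rw [simple_mul_simple_cancel_left] at h₁
  omega

namespace IsProjFamily

variable {P : Set B → W → W}

theorem isPrefix (hP : cs.IsProjFamily P) (J : Set B) (w : W) : cs.IsPrefix (P J w) w := by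
  have := cs.length_mul_of_mem_minReps (hP J w).1 (hP J w).2
  rwa [mul_inv_cancel_left] at this

/-- Deodhar's lemma. -/
theorem apply_simple_mul (hP : cs.IsProjFamily P) (J : Set B) (i : B) (w : W) :
    P J (s i * w) = P J w ∨ P J (s i * w) = s i * P J w := by
  obtain ⟨hx, hxw⟩ := hP J w
  obtain ⟨hy, hyw⟩ := hP J (s i * w)
  set x := P J w
  set y := P J (s i * w)
  have hyx : y⁻¹ * (s i * x) ∈ cs.parabolic J := by
    rw [show y⁻¹ * (s i * x) = y⁻¹ * (s i * w) * (x⁻¹ * w)⁻¹ by group]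
    exact mul_mem hyw (inv_mem hxw)
  by_cases hsx : s i * x ∈ cs.minReps J
  · exact Or.inr (cs.eq_of_mem_minReps hy hsx hyx)
  -- otherwise a descent `s j` of `s i * x` is not one of `x`, so `s i = x * s j * x⁻¹`
  obtain ⟨j, hj, hdesc⟩ : ∃ j ∈ J, cs.IsRightDescent (s i * x) j := by
    simpa [mem_minReps_iff] using hsx
  have hconj := cs.eq_simple_of_isRightInversion_simple
    (((cs.isRightDescent_mul_iff _ _ j).1 hdesc).or.resolve_right (cs.mem_minReps_iff.1 hx j hj))
  have hx' : x = s i * x * s j := by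
    rw [← hconj, inv_mul_cancel_right, simple_mul_simple_cancel_right]
  refine Or.inl (cs.eq_of_mem_minReps hy hx ?_)
  rw [hx', ← mul_assoc]
  exact mul_mem hyx (cs.simple_mem_parabolic hj)

theorem apply_apply_simple_mul (hP : cs.IsProjFamily P) (I J : Set B) (i : B) (w : W) :
    P I (P J (s i * w)) = P I (P J w) ∨ P I (P J (s i * w)) = s i * P I (P J w) := by
  rcases hP.apply_simple_mul J i w with h | h <;> rw [h]
  · exact Or.inl rfl
  · exact hP.apply_simple_mul I i (P J w)

theorem comm_of_comm_simple_mul (hP : cs.IsProjFamily P) {I J : Set B} {i : B} {w : W}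
    (hi : ℓ w < ℓ (s i * w))
    (h : P I (P J (s i * w)) = P J (P I (s i * w))) : P I (P J w) = P J (P I w) := by
  have hIJ := (hP.isPrefix I (P J w)).trans (hP.isPrefix J w)
  have hJI := (hP.isPrefix J (P I w)).trans (hP.isPrefix I w)
  rcases hP.apply_apply_simple_mul I J i w with h₁ | h₁ <;>
    rcases hP.apply_apply_simple_mul J I i w with h₂ | h₂ <;> rw [h₁, h₂] at h
  · exact h
  · exact absurd h (hIJ.ne_simple_mul hJI hi)
  · exact absurd h.symm (hJI.ne_simple_mul hIJ hi)
  · exact mul_left_cancel h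

end IsProjFamily

end CoxeterSystem

theorem stmt_7_general (cs : CoxeterSystem M W) (P : Set B → W → W)
    (hP : cs.IsProjFamily P) (I J : Set B)
    (w₀ : W) (hw₀ : ∀ u : W, cs.length u ≤ cs.length w₀) :
    (∀ w : W, P I (P J w) = P J (P I w)) ↔ P I (P J w₀) = P J (P I w₀) := by
  refine ⟨fun h => h w₀, fun h w => ?_⟩
  induction hn : cs.length w₀ - cs.length w using Nat.strong_induction_on generalizing w with
  | _ n ih =>
    obtain rfl | hne := eq_or_ne w w₀
    · exact h
    obtain ⟨i, hi⟩ := cs.exists_length_lt_simple_mul_of_ne hw₀ hne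
    exact hP.comm_of_comm_simple_mul hi (ih _ (by have := hw₀ (cs.simple i * w); omega) _ rfl)

theorem stmt_7 (cs : CoxeterSystem M W) [Finite W] (P : Set B → W → W)
    (hP : cs.IsProjFamily P) (I J : Set B)
    (w₀ : W) (hw₀ : ∀ u : W, cs.length u ≤ cs.length w₀) :
    (∀ w : W, P I (P J w) = P J (P I w)) ↔ P I (P J w₀) = P J (P I w₀) :=
  stmt_7_general cs P hP I J w₀ hw₀
end

section
/- Let (W,S) be a Coxeter system and u ∈ W. The idempotent P^u ∘ P^u = P^u holds (where P^u is the composition of single-generator projections along a reduced expression of u) if and only if u = w₀(J) for some J ⊆ S with W_J finite, i.e., u is the longest element of a finite standard parabolic subgroup. -/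
open CoxeterSystem

variable {B W : Type*} [Group W] {M : CoxeterMatrix B}

/-- The projection `P^{{s}}` onto `W^{{s}}`: removes a trailing `s` if that shortens `w`. -/
noncomputable def CoxeterSystem.projSimple (cs : CoxeterSystem M W) (s : B) (w : W) : W :=
  if cs.length (w * cs.simple s) < cs.length w then w * cs.simple s else w

/-- For a word `ω = s₁ ⋯ s_k`, the composition `P^{{s₁}} ∘ ⋯ ∘ P^{{s_k}}`. -/
noncomputable def CoxeterSystem.projWord (cs : CoxeterSystem M W) (ω : List B) : W → W :=
  ω.foldr (fun s g => cs.projSimple s ∘ g) id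

/-- The Bruhat order, via the subword property: `u ≤ v` iff some reduced word for `v`
has a subword whose product is `u`. -/
def CoxeterSystem.bruhatLE (cs : CoxeterSystem M W) (u v : W) : Prop :=
  ∃ ω : List B, cs.IsReduced ω ∧ cs.wordProd ω = v ∧
    ∃ ω' : List B, ω'.Sublist ω ∧ cs.wordProd ω' = u

/-
For a reduced word `ω` of `u`, `P^ω x = x · π ν` for a subword `ν` of `ω` read backwards, and
`ℓ(P^ω x · u) = ℓ(P^ω x) + ℓ(u)`. Since `P^ω y = y` exactly when `y` has no right descent among
the letters of `ω`, `P^ω` is idempotent iff no `P^ω x` has such a descent. If `u` is longest in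
`W_J`, every letter of `ω` is a left descent of `u`, and the additivity forbids it to be a right
descent of `P^ω x`. Conversely, if `P^ω` is idempotent and `J` is the set of letters of `ω`,
then for `v ∈ W_J` the element `P^ω v⁻¹ ∈ W_J` has no right descent in `J`, so it is `1` and `v`
is a product of at most `ℓ(u)` simple reflections.

The additivity and the exchange property both come from the mod-2 reflection cocycle
`inversionParity u t`, which for a reflection `t` records whether `ℓ(u t) < ℓ(u)`
(Björner–Brenti, *Combinatorics of Coxeter groups*, §1.4).
-/

open List

theorem mul_mul_eq_iff_eq_inv_mul_mul_inv {G : Type*} [Group G] (a b w c : G) :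
    a * w * b = c ↔ w = a⁻¹ * c * b⁻¹ := by
  constructor <;> rintro rfl <;> group

namespace CoxeterSystem

variable (cs : CoxeterSystem M W)

open Classical in
noncomputable def reflFlip (i : B) : Function.End (W × ZMod 2) :=
  fun p => (cs.simple i * p.1 * cs.simple i, p.2 + if p.1 = cs.simple i then 1 else 0)

open Classical in
theorem reflFlip_mul_reflFlip_pow_smul (i j : B) (k : ℕ) (w : W) (ε : ZMod 2) :
    (cs.reflFlip i * cs.reflFlip j) ^ k • (w, ε) =
      (((cs.simple j * cs.simple i) ^ k)⁻¹ * w * (cs.simple j * cs.simple i) ^ k,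
        ε + ∑ r ∈ Finset.range (2 * k),
          if w = (cs.simple j * cs.simple i) ^ r * cs.simple j then 1 else 0) := by
  set x := cs.simple j * cs.simple i with hx_def
  have hxs : cs.simple j * x⁻¹ = x * cs.simple j := by simp [hx_def, mul_assoc]
  clear_value x
  induction k generalizing w ε with
  | zero => simp
  | succ k ih =>
    have hstep : (cs.reflFlip i * cs.reflFlip j) • (w, ε) = (x⁻¹ * w * x,
        ε + ((if w = x ^ 0 * cs.simple j then 1 else 0) +
          if w = x ^ 1 * cs.simple j then 1 else 0)) := by
      simp only [mul_smul, Function.End.smul_def, reflFlip, mul_mul_eq_iff_eq_inv_mul_mul_inv,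
        mul_inv_rev, inv_simple, add_assoc, pow_zero, one_mul, pow_one, hx_def]
      simp only [mul_assoc]
    have hshift (r : ℕ) : (x⁻¹ * w * x = x ^ r * cs.simple j) ↔ w = x ^ (r + 2) * cs.simple j := by
      rw [mul_mul_eq_iff_eq_inv_mul_mul_inv, inv_inv]
      simp only [mul_assoc, hxs]
      group
    rw [pow_succ, mul_smul, hstep, ih]
    simp only [hshift]
    ext
    · group
    · rw [Nat.mul_succ, Finset.sum_range_succ', Finset.sum_range_succ']
      ring_nf

-- Along the alternating word of length `2m` the counted reflections `(s_j s_i)^r s_j` are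
-- `m`-periodic in `r`, so each is counted an even number of times.
open Classical in
theorem isLiftable_reflFlip : M.IsLiftable cs.reflFlip := by
  intro i j
  have hm := cs.simple_mul_simple_pow' i j
  generalize M i j = m at hm ⊢
  funext ⟨w, ε⟩
  change (cs.reflFlip i * cs.reflFlip j) ^ m • (w, ε) = (w, ε)
  rw [reflFlip_mul_reflFlip_pow_smul, hm, two_mul, Finset.sum_range_add]
  simp only [pow_add, hm, one_mul, inv_one, mul_one, CharTwo.add_self_eq_zero, add_zero]

noncomputable def reflRep : W →* Function.End (W × ZMod 2) :=
  cs.lift ⟨cs.reflFlip, cs.isLiftable_reflFlip⟩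

noncomputable def inversionParity (u t : W) : ZMod 2 := (cs.reflRep u • (t, 0)).2

theorem reflRep_simple (i : B) : cs.reflRep (cs.simple i) = cs.reflFlip i :=
  cs.lift_apply_simple _ i

theorem reflRep_smul (u w : W) (ε : ZMod 2) :
    cs.reflRep u • (w, ε) = (u * w * u⁻¹, ε + cs.inversionParity u w) := by
  induction u using cs.simple_induction_left generalizing w ε with
  | one => simp [inversionParity]
  | mul_simple_left u i ih =>
    have h (δ : ZMod 2) : cs.reflRep (cs.simple i * u) • (w, δ) =
        ((cs.simple i * u) * w * (cs.simple i * u)⁻¹,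
          δ + (cs.inversionParity u w + (cs.reflFlip i • (u * w * u⁻¹, 0)).2)) := by
      rw [map_mul, mul_smul, ih, reflRep_simple]
      simp [reflFlip, mul_assoc, add_assoc]
    rw [h, show cs.inversionParity (cs.simple i * u) w = _ from congrArg Prod.snd (h 0), zero_add]

theorem inversionParity_one (w : W) : cs.inversionParity 1 w = 0 := by
  simp [inversionParity]

open Classical in
theorem inversionParity_simple (i : B) (w : W) :
    cs.inversionParity (cs.simple i) w = if w = cs.simple i then 1 else 0 := by
  simp [inversionParity, reflRep_simple, reflFlip]

theorem inversionParity_mul (a b w : W) :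
    cs.inversionParity (a * b) w = cs.inversionParity b w + cs.inversionParity a (b * w * b⁻¹) := by
  have h := cs.reflRep_smul (a * b) w 0
  rw [map_mul, mul_smul, cs.reflRep_smul b, cs.reflRep_smul a] at h
  simpa using (congrArg Prod.snd h).symm

theorem mem_rightInvSeq_of_inversionParity_ne_zero {ω : List B} {t : W}
    (h : cs.inversionParity (cs.wordProd ω) t ≠ 0) : t ∈ cs.rightInvSeq ω := by
  induction ω with
  | nil => simp [inversionParity_one] at h
  | cons i ω ih =>
    rw [wordProd_cons, inversionParity_mul, inversionParity_simple] at h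
    rw [rightInvSeq, mem_cons]
    by_cases hc : cs.wordProd ω * t * (cs.wordProd ω)⁻¹ = cs.simple i
    · left
      rw [← hc]
      group
    · rw [if_neg hc, add_zero] at h
      exact Or.inr (ih h)

open Classical in
theorem inversionParity_self {t : W} (ht : cs.IsReflection t) : cs.inversionParity t t = 1 := by
  obtain ⟨v, i, rfl⟩ := ht
  have hconj : v⁻¹ * (v * cs.simple i * v⁻¹) * v⁻¹⁻¹ = cs.simple i := by group
  have h₁ := cs.inversionParity_mul v v⁻¹ (v * cs.simple i * v⁻¹)
  have h₂ := cs.inversionParity_mul (v * cs.simple i) v⁻¹ (v * cs.simple i * v⁻¹)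
  rw [mul_inv_cancel, inversionParity_one, hconj] at h₁
  rw [hconj, cs.inversionParity_mul v (cs.simple i), inversionParity_simple, if_pos rfl,
    simple_mul_simple_self, one_mul, inv_simple] at h₂
  linear_combination h₂ - h₁

theorem inversionParity_eq_one_iff {t : W} (ht : cs.IsReflection t) (w : W) :
    cs.inversionParity w t = 1 ↔ cs.length (w * t) < cs.length w := by
  have forward (w : W) (h : cs.inversionParity w t = 1) : cs.length (w * t) < cs.length w := by
    obtain ⟨ω, hω, rfl⟩ := cs.exists_isReduced w
    exact (cs.isRightInversion_of_mem_rightInvSeq hω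
      (cs.mem_rightInvSeq_of_inversionParity_ne_zero (h ▸ one_ne_zero))).2
  refine ⟨forward w, fun hlt => ?_⟩
  have hw : w * t * t = w := by rw [mul_assoc, ht.mul_self, mul_one]
  have hsplit := cs.inversionParity_mul (w * t) t t
  rw [hw, cs.inversionParity_self ht, ht.mul_self, one_mul, ht.inv] at hsplit
  rcases (by decide : ∀ x : ZMod 2, x = 0 ∨ x = 1) (cs.inversionParity (w * t) t) with h | h
  · rw [hsplit, h, add_zero]
  · have hgt := forward _ h
    rw [hw] at hgt
    exact absurd hlt (lt_asymm hgt)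

theorem inversionParity_eq_zero_iff {t : W} (ht : cs.IsReflection t) (w : W) :
    cs.inversionParity w t = 0 ↔ cs.length w < cs.length (w * t) := by
  have hne := ht.length_mul_left_ne w
  rw [(by decide : ∀ x : ZMod 2, x = 0 ↔ x ≠ 1), Ne, cs.inversionParity_eq_one_iff ht]
  omega

theorem exists_simple_mul_wordProd_eq_eraseIdx {ω : List B} {i : B}
    (h : cs.IsLeftDescent (cs.wordProd ω) i) :
    ∃ j < ω.length, cs.simple i * cs.wordProd ω = cs.wordProd (ω.eraseIdx j) := by
  set t := (cs.wordProd ω)⁻¹ * cs.simple i * cs.wordProd ω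
  have ht : cs.IsReflection t := ⟨(cs.wordProd ω)⁻¹, i, by simp [t]⟩
  have hwt : cs.wordProd ω * t = cs.simple i * cs.wordProd ω := by simp [t, ← mul_assoc]
  have hmem : t ∈ cs.rightInvSeq ω := by
    apply cs.mem_rightInvSeq_of_inversionParity_ne_zero
    rw [(cs.inversionParity_eq_one_iff ht _).2 (hwt ▸ h)]
    exact one_ne_zero
  obtain ⟨j, hj, hget⟩ := List.mem_iff_getElem.mp hmem
  refine ⟨j, by simpa using hj, ?_⟩
  rw [← hwt, ← hget, ← List.getD_eq_getElem _ 1 hj, wordProd_mul_getD_rightInvSeq]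

theorem length_mul_lt_length_mul_simple_mul {y v : W} {i : B} (hy : ¬cs.IsRightDescent y i)
    (hv : ¬cs.IsLeftDescent v i) : cs.length (y * v) < cs.length (y * cs.simple i * v) := by
  set t := v⁻¹ * cs.simple i * v
  have ht : cs.IsReflection t := ⟨v⁻¹, i, by simp [t]⟩
  have hvt : v * t = cs.simple i * v := by simp [t, ← mul_assoc]
  -- `y s_i v = (y v) t`, and the cocycle identity splits the parity at `(y v, t)` into the
  -- parities at `(v, t)` and `(y, s_i)`, both zero.
  have hparity : cs.inversionParity (y * v) t = 0 := by
    rw [cs.inversionParity_mul, show v * t * v⁻¹ = cs.simple i by simp [t, ← mul_assoc],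
      (cs.inversionParity_eq_zero_iff ht v).2, (cs.inversionParity_eq_zero_iff
        (cs.isReflection_simple i) y).2, add_zero]
    · rw [cs.not_isRightDescent_iff] at hy
      omega
    · rw [hvt, cs.not_isLeftDescent_iff.1 hv]
      omega
  rw [mul_assoc y, ← hvt, ← mul_assoc]
  exact (cs.inversionParity_eq_zero_iff ht _).1 hparity

theorem projWord_cons (i : B) (ω : List B) (x : W) :
    cs.projWord (i :: ω) x = cs.projSimple i (cs.projWord ω x) := rfl

theorem projSimple_of_isRightDescent {w : W} {i : B} (h : cs.IsRightDescent w i) :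
    cs.projSimple i w = w * cs.simple i := if_pos h

theorem projSimple_of_not_isRightDescent {w : W} {i : B} (h : ¬cs.IsRightDescent w i) :
    cs.projSimple i w = w := if_neg h

theorem length_projSimple_le (i : B) (w : W) : cs.length (cs.projSimple i w) ≤ cs.length w := by
  by_cases h : cs.IsRightDescent w i
  · rw [cs.projSimple_of_isRightDescent h]
    exact h.le
  · rw [cs.projSimple_of_not_isRightDescent h]

theorem length_projWord_lt_of_ne {ω : List B} {w : W} (h : cs.projWord ω w ≠ w) :
    cs.length (cs.projWord ω w) < cs.length w := by
  induction ω with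
  | nil => exact absurd rfl h
  | cons i ω ih =>
    rw [projWord_cons] at h ⊢
    by_cases hω : cs.projWord ω w = w
    · rw [hω] at h ⊢
      by_cases hi : cs.IsRightDescent w i
      · rwa [cs.projSimple_of_isRightDescent hi]
      · exact absurd (cs.projSimple_of_not_isRightDescent hi) h
    · exact (cs.length_projSimple_le i _).trans_lt (ih hω)

theorem projWord_eq_self_iff {ω : List B} {w : W} :
    cs.projWord ω w = w ↔ ∀ i ∈ ω, ¬cs.IsRightDescent w i := by
  induction ω with
  | nil => simp [projWord]
  | cons i ω ih =>
    rw [projWord_cons, forall_mem_cons]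
    by_cases hω : cs.projWord ω w = w
    · rw [hω, ← ih, and_iff_left hω]
      exact ⟨fun h hi => (cs.length_mul_simple_ne w i)
        (by rw [← cs.projSimple_of_isRightDescent hi, h]), cs.projSimple_of_not_isRightDescent⟩
    · refine iff_of_false (fun h => ?_) (fun h => hω (ih.2 h.2))
      have := (cs.length_projSimple_le i _).trans_lt (cs.length_projWord_lt_of_ne hω)
      exact this.ne (congrArg cs.length h)

theorem exists_sublist_projWord_eq_mul (ω : List B) (x : W) :
    ∃ ν : List B, ν.Sublist ω.reverse ∧ cs.projWord ω x = x * cs.wordProd ν := by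
  induction ω with
  | nil => exact ⟨[], Sublist.slnil, by simp [projWord]⟩
  | cons i ω ih =>
    obtain ⟨ν, hν, heq⟩ := ih
    rw [projWord_cons, reverse_cons]
    by_cases hi : cs.IsRightDescent (cs.projWord ω x) i
    · refine ⟨ν ++ [i], hν.append (Sublist.refl _), ?_⟩
      rw [cs.projSimple_of_isRightDescent hi, heq, wordProd_append, wordProd_singleton, mul_assoc]
    · exact ⟨ν, hν.trans (sublist_append_left _ _), by
        rw [cs.projSimple_of_not_isRightDescent hi, heq]⟩

theorem length_projWord_mul_wordProd {ω : List B} (hω : cs.IsReduced ω) (x : W) :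
    cs.length (cs.projWord ω x * cs.wordProd ω) = cs.length (cs.projWord ω x) + ω.length := by
  induction ω with
  | nil => simp [projWord]
  | cons i ω ih =>
    have hω' : cs.IsReduced ω := by simpa using hω.drop 1
    have hlen : cs.length (cs.simple i * cs.wordProd ω) = ω.length + 1 := by
      rw [← wordProd_cons]; exact hω
    rw [projWord_cons, wordProd_cons, length_cons]
    by_cases hi : cs.IsRightDescent (cs.projWord ω x) i
    · rw [cs.projSimple_of_isRightDescent hi, mul_assoc, simple_mul_simple_cancel_left, ih hω']
      rw [cs.isRightDescent_iff] at hi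
      omega
    · rw [cs.projSimple_of_not_isRightDescent hi]
      have hv : ¬cs.IsLeftDescent (cs.wordProd ω) i := by
        rw [cs.not_isLeftDescent_iff, hlen, hω'.eq]
      have hlt := cs.length_mul_lt_length_mul_simple_mul hi hv
      have hle := cs.length_mul_le (cs.projWord ω x) (cs.simple i * cs.wordProd ω)
      rw [← mul_assoc] at hle ⊢
      rw [ih hω'] at hlt
      omega

theorem not_isRightDescent_projWord {ω : List B} (hω : cs.IsReduced ω) {i : B}
    (hi : cs.IsLeftDescent (cs.wordProd ω) i) (x : W) :
    ¬cs.IsRightDescent (cs.projWord ω x) i := by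
  intro hx
  have hadd := cs.length_projWord_mul_wordProd hω x
  have hle := cs.length_mul_le (cs.projWord ω x * cs.simple i) (cs.simple i * cs.wordProd ω)
  rw [mul_assoc, simple_mul_simple_cancel_left, hadd] at hle
  unfold IsLeftDescent at hi
  unfold IsRightDescent at hx
  rw [hω.eq] at hi
  omega

theorem isLeftDescent_wordProd_cons {i : B} {ω : List B} (h : cs.IsReduced (i :: ω)) :
    cs.IsLeftDescent (cs.wordProd (i :: ω)) i := by
  have h' : cs.IsReduced ω := by simpa using h.drop 1
  rw [IsLeftDescent, wordProd_cons, simple_mul_simple_cancel_left, h'.eq, ← wordProd_cons, h.eq,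
    length_cons]
  exact Nat.lt_succ_self _

theorem exists_reduced_sublist (ω : List B) :
    ∃ ν : List B, ν.Sublist ω ∧ cs.IsReduced ν ∧ cs.wordProd ν = cs.wordProd ω := by
  induction ω with
  | nil => exact ⟨[], Sublist.slnil, cs.length_one, rfl⟩
  | cons i ω ih =>
    obtain ⟨ν, hsub, hred, heq⟩ := ih
    rw [wordProd_cons, ← heq]
    by_cases hi : cs.IsLeftDescent (cs.wordProd ν) i
    · obtain ⟨j, hj, hν⟩ := cs.exists_simple_mul_wordProd_eq_eraseIdx hi
      refine ⟨ν.eraseIdx j, (eraseIdx_sublist ν j).trans (hsub.cons i), ?_, hν.symm⟩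
      rw [IsReduced, ← hν, length_eraseIdx_of_lt hj, ← hred.eq]
      rw [cs.isLeftDescent_iff] at hi
      omega
    · refine ⟨i :: ν, hsub.cons_cons i, ?_, wordProd_cons ..⟩
      rw [IsReduced, wordProd_cons, cs.not_isLeftDescent_iff.1 hi, hred.eq, length_cons]

theorem wordProd_mem_parabolic {J : Set B} {ω : List B} (h : ∀ i ∈ ω, i ∈ J) :
    cs.wordProd ω ∈ cs.parabolic J :=
  (cs.parabolic J).list_prod_mem <| by
    simpa [parabolic] using fun i hi =>
      Subgroup.subset_closure (Set.mem_image_of_mem cs.simple (h i hi))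

theorem mem_parabolic_iff {J : Set B} {w : W} :
    w ∈ cs.parabolic J ↔ ∃ ω : List B, cs.IsReduced ω ∧ (∀ i ∈ ω, i ∈ J) ∧ cs.wordProd ω = w := by
  refine ⟨fun hw => ?_, fun ⟨ω, _, hJ, hω⟩ => hω ▸ cs.wordProd_mem_parabolic hJ⟩
  suffices ∃ ω : List B, (∀ i ∈ ω, i ∈ J) ∧ cs.wordProd ω = w by
    obtain ⟨ω, hJ, rfl⟩ := this
    obtain ⟨ν, hsub, hred, heq⟩ := cs.exists_reduced_sublist ω
    exact ⟨ν, hred, fun i hi => hJ i (hsub.subset hi), heq⟩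
  induction hw using Subgroup.closure_induction with
  | mem _ hx =>
    obtain ⟨i, hi, rfl⟩ := hx
    exact ⟨[i], by simpa using hi, wordProd_singleton ..⟩
  | one => exact ⟨[], by simp, wordProd_nil ..⟩
  | mul _ _ _ _ hx hy =>
    obtain ⟨ωx, hx, rfl⟩ := hx
    obtain ⟨ωy, hy, rfl⟩ := hy
    exact ⟨ωx ++ ωy, fun i hi => (mem_append.1 hi).elim (hx i) (hy i), wordProd_append ..⟩
  | inv _ _ hx =>
    obtain ⟨ω, hω, rfl⟩ := hx
    exact ⟨ω.reverse, by simpa using hω, wordProd_reverse ..⟩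

theorem eq_one_of_mem_parabolic {J : Set B} {w : W} (hw : w ∈ cs.parabolic J)
    (h : ∀ j ∈ J, ¬cs.IsRightDescent w j) : w = 1 := by
  obtain ⟨ω, hred, hJ, hω⟩ := cs.mem_parabolic_iff.1 (inv_mem hw)
  cases ω with
  | nil => simpa using hω.symm
  | cons j ω =>
    have := cs.isLeftDescent_wordProd_cons hred
    rw [hω, isLeftDescent_inv_iff] at this
    exact absurd this (h j (hJ j mem_cons_self))

theorem simple_mem_parabolic_of_mem {J : Set B} {ω : List B} (hω : cs.IsReduced ω)
    (hJ : cs.wordProd ω ∈ cs.parabolic J) {i : B} (hi : i ∈ ω) : cs.simple i ∈ cs.parabolic J := by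
  induction ω with
  | nil => simp at hi
  | cons k ω ih =>
    obtain ⟨ν, -, hνJ, hν⟩ := cs.mem_parabolic_iff.1 hJ
    have hk : cs.simple k ∈ cs.parabolic J := by
      have hdesc := cs.isLeftDescent_wordProd_cons hω
      rw [← hν] at hdesc
      obtain ⟨j, -, hj⟩ := cs.exists_simple_mul_wordProd_eq_eraseIdx hdesc
      have : cs.simple k = cs.wordProd (ν.eraseIdx j) * (cs.wordProd ν)⁻¹ := by
        rw [← hj]; group
      rw [this]
      exact mul_mem (cs.wordProd_mem_parabolic fun b hb => hνJ b ((eraseIdx_sublist ν j).subset hb))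
        (inv_mem (hν ▸ hJ))
    rcases mem_cons.1 hi with rfl | hi
    · exact hk
    · refine ih (by simpa using hω.drop 1) ?_ hi
      rw [← simple_mul_simple_cancel_left cs k (w := cs.wordProd ω), ← wordProd_cons]
      exact mul_mem hk hJ

end CoxeterSystem

theorem stmt_12 (cs : CoxeterSystem M W) (u : W) :
    (∀ ω : List B, cs.IsReduced ω → cs.wordProd ω = u →
      cs.projWord ω ∘ cs.projWord ω = cs.projWord ω) ↔
    (∃ J : Set B, u ∈ cs.parabolic J ∧ ∀ v ∈ cs.parabolic J, cs.length v ≤ cs.length u) := by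
  constructor
  · intro h
    obtain ⟨ω, hω, rfl⟩ := cs.exists_isReduced u
    refine ⟨{i | i ∈ ω}, cs.wordProd_mem_parabolic fun i hi => hi, fun v hv => ?_⟩
    obtain ⟨ν, hν, hy⟩ := cs.exists_sublist_projWord_eq_mul ω v⁻¹
    have hfix : ∀ i ∈ ω, ¬cs.IsRightDescent (cs.projWord ω v⁻¹) i :=
      cs.projWord_eq_self_iff.1 (congrFun (h ω hω rfl) v⁻¹)
    have hνJ : cs.wordProd ν ∈ cs.parabolic {i | i ∈ ω} :=
      cs.wordProd_mem_parabolic fun i hi => mem_reverse.1 (hν.subset hi)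
    have hy1 : cs.projWord ω v⁻¹ = 1 :=
      cs.eq_one_of_mem_parabolic (hy ▸ mul_mem (inv_mem hv) hνJ) hfix
    rw [hy1, eq_comm, inv_mul_eq_one] at hy
    calc cs.length v ≤ ν.length := hy ▸ cs.length_wordProd_le ν
      _ ≤ ω.length := by simpa using hν.length_le
      _ = cs.length (cs.wordProd ω) := hω.symm
  · rintro ⟨J, huJ, hmax⟩ ω hω rfl
    funext x
    refine cs.projWord_eq_self_iff.2 fun i hi => cs.not_isRightDescent_projWord hω ?_ x
    have hsi := cs.simple_mem_parabolic_of_mem hω huJ hi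
    have := hmax _ (mul_mem hsi huJ)
    have := cs.length_simple_mul_ne (cs.wordProd ω) i
    unfold IsLeftDescent
    omega
end
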